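/- arXiv:2209.13639 — 2 statements merged into one kernel-verified Lean document; each statement's English description precedes it below -/
import Mathlib

section
/- Fix integers 1 ≤ k ≤ K, nonnegative integer n, and reals α > 2, β > 0, D > 0, θ > 0. Define P(γ̄) = (2k/Γ(n+1))·C(K,k)·Σ_{j=0}^{K-k} (-1)^j C(K-k,j) D^{-2(k+j)} ∫_0^D γ(n+1, β x^α/(γ̄ θ)) x^{2(k+j)-1} dx. Then γ̄^{n+1}·P(γ̄) converges as γ̄ → ∞ to (2k/Γ(n+2))·C(K,k)·(βD^α/θ)^{n+1}·Σ_{j=0}^{K-k} (-1)^j C(K-k,j)/(α(n+1)+2(k+j)). -/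
/-!
For `z ≥ 0`, `1 - s ≤ e^{-s} ≤ 1` on `[0, z]` gives
`|γ(n+1, z) - z^{n+1}/(n+1)| ≤ z^{n+2}/(n+2)`, so `g^{n+1} γ(n+1, a/g) → a^{n+1}/(n+1)`
as `g → ∞`, with a bound uniform in `g ≥ 1`.
Dominated convergence moves this limit inside each integral, the limiting integrals are integrals
of powers of `x`, and `Γ(n+2) = (n+1) Γ(n+1)` assembles the sum.
-/

open Filter Topology

noncomputable def lowerGamma (a x : ℝ) : ℝ := ∫ s in (0:ℝ)..x, s ^ (a - 1) * Real.exp (-s)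

open intervalIntegral

theorem lowerGamma_natCast_add_one (n : ℕ) (z : ℝ) :
    lowerGamma (n + 1) z = ∫ s in (0:ℝ)..z, s ^ n * Real.exp (-s) := by
  simp [lowerGamma, Real.rpow_natCast]

theorem continuous_lowerGamma_natCast_add_one (n : ℕ) : Continuous (lowerGamma (n + 1)) := by
  rw [funext (lowerGamma_natCast_add_one n)]
  exact continuous_primitive (fun a b => (by fun_prop : Continuous _).intervalIntegrable a b) 0

theorem abs_lowerGamma_sub_pow_div_le (n : ℕ) {z : ℝ} (hz : 0 ≤ z) :
    |lowerGamma (n + 1) z - z ^ (n + 1) / (n + 1)| ≤ z ^ (n + 2) / (n + 2) := by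
  have hsub : lowerGamma (n + 1) z - z ^ (n + 1) / (n + 1) =
      ∫ s in (0:ℝ)..z, s ^ n * (Real.exp (-s) - 1) := by
    simp_rw [lowerGamma_natCast_add_one, mul_sub, mul_one]
    rw [integral_sub (Continuous.intervalIntegrable (by fun_prop) _ _)
      (Continuous.intervalIntegrable (by fun_prop) _ _), integral_pow]
    simp
  have hpt : ∀ s : ℝ, 0 ≤ s → ‖s ^ n * (Real.exp (-s) - 1)‖ ≤ s ^ (n + 1) := by
    intro s hs
    rw [Real.norm_eq_abs, abs_mul, abs_of_nonneg (pow_nonneg hs n), pow_succ]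
    gcongr
    rw [abs_le]
    constructor
    · linarith [Real.add_one_le_exp (-s)]
    · linarith [Real.exp_le_one_iff.2 (neg_nonpos.2 hs)]
  calc |lowerGamma (n + 1) z - z ^ (n + 1) / (n + 1)|
      ≤ ∫ s in (0:ℝ)..z, s ^ (n + 1) := by
        rw [hsub, ← Real.norm_eq_abs]
        exact norm_integral_le_of_norm_le hz (.of_forall fun s hs => hpt s hs.1.le)
          ((continuous_pow _).intervalIntegrable _ _)
    _ = z ^ (n + 2) / (n + 2) := by
        simp [integral_pow]
        ring

theorem abs_pow_mul_lowerGamma_div_sub_le (n : ℕ) {a g : ℝ} (ha : 0 ≤ a) (hg : 0 < g) :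
    |g ^ (n + 1) * lowerGamma (n + 1) (a / g) - a ^ (n + 1) / (n + 1)|
      ≤ a ^ (n + 2) / (n + 2) / g := by
  have hscale : g ^ (n + 1) * lowerGamma (n + 1) (a / g) - a ^ (n + 1) / (n + 1)
      = g ^ (n + 1) * (lowerGamma (n + 1) (a / g) - (a / g) ^ (n + 1) / (n + 1)) := by
    rw [div_pow]
    field_simp
  rw [hscale, abs_mul, abs_of_pos (by positivity)]
  calc g ^ (n + 1) * |lowerGamma (n + 1) (a / g) - (a / g) ^ (n + 1) / (n + 1)|
      ≤ g ^ (n + 1) * ((a / g) ^ (n + 2) / (n + 2)) := by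
        gcongr
        exact abs_lowerGamma_sub_pow_div_le n (by positivity)
    _ = a ^ (n + 2) / (n + 2) / g := by
        rw [div_pow]
        field_simp
        ring

theorem tendsto_pow_mul_lowerGamma_div (n : ℕ) {a : ℝ} (ha : 0 ≤ a) :
    Tendsto (fun g => g ^ (n + 1) * lowerGamma (n + 1) (a / g)) atTop
      (𝓝 (a ^ (n + 1) / (n + 1))) := by
  rw [tendsto_iff_norm_sub_tendsto_zero]
  refine squeeze_zero' (.of_forall fun _ => norm_nonneg _) ?_
    ((tendsto_const_nhds (x := a ^ (n + 2) / (n + 2))).div_atTop tendsto_id)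
  filter_upwards [eventually_gt_atTop 0] with g hg
  exact abs_pow_mul_lowerGamma_div_sub_le n ha hg

theorem abs_pow_mul_lowerGamma_div_le (n : ℕ) {a g : ℝ} (ha : 0 ≤ a) (hg : 1 ≤ g) :
    |g ^ (n + 1) * lowerGamma (n + 1) (a / g)|
      ≤ a ^ (n + 1) / (n + 1) + a ^ (n + 2) / (n + 2) := by
  calc |g ^ (n + 1) * lowerGamma (n + 1) (a / g)|
      ≤ |a ^ (n + 1) / (n + 1)|
        + |g ^ (n + 1) * lowerGamma (n + 1) (a / g) - a ^ (n + 1) / (n + 1)| :=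
        le_of_eq_of_le (by rw [add_sub_cancel]) (abs_add_le _ _)
    _ ≤ a ^ (n + 1) / (n + 1) + a ^ (n + 2) / (n + 2) := by
        rw [abs_of_nonneg (by positivity)]
        gcongr
        exact (abs_pow_mul_lowerGamma_div_sub_le n ha (zero_lt_one.trans_le hg)).trans
          (div_le_self (by positivity) hg)

theorem tendsto_pow_mul_integral_lowerGamma_div (n : ℕ) {φ w : ℝ → ℝ} (hφ : Continuous φ)
    (hw : Continuous w) {a b : ℝ} (hφ₀ : ∀ x ∈ Set.uIoc a b, 0 ≤ φ x) :
    Tendsto (fun g => g ^ (n + 1) * ∫ x in a..b, lowerGamma (n + 1) (φ x / g) * w x) atTop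
      (𝓝 (∫ x in a..b, φ x ^ (n + 1) / (n + 1) * w x)) := by
  simp_rw [← integral_const_mul, ← mul_assoc]
  have hγ := continuous_lowerGamma_natCast_add_one n
  refine tendsto_integral_filter_of_dominated_convergence
    (fun x => (φ x ^ (n + 1) / (n + 1) + φ x ^ (n + 2) / (n + 2)) * |w x|)
    (.of_forall fun g => by fun_prop) ?_
    (Continuous.intervalIntegrable (by fun_prop) _ _) ?_
  · filter_upwards [eventually_ge_atTop 1] with g hg
    refine .of_forall fun x hx => ?_
    rw [norm_mul, Real.norm_eq_abs, Real.norm_eq_abs]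
    gcongr
    exact abs_pow_mul_lowerGamma_div_le n (hφ₀ x hx) hg
  · exact .of_forall fun x hx => (tendsto_pow_mul_lowerGamma_div n (hφ₀ x hx)).mul_const _

theorem integral_rpow_pow_mul_pow_sub_one {α : ℝ} (hα : 0 ≤ α) (N : ℕ) {q : ℕ}
    (hq : q ≠ 0) {D : ℝ} (hD : 0 ≤ D) :
    ∫ x in (0:ℝ)..D, (x ^ α) ^ N * x ^ (q - 1) = (D ^ α) ^ N * D ^ q / (α * N + q) := by
  have hpos : 0 < α * N + q := by positivity
  have hrpow : ∀ x : ℝ, 0 ≤ x → (x ^ α) ^ N * x ^ (q - 1) = x ^ (α * N + q - 1) := by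
    intro x hx
    rw [← Real.rpow_natCast, ← Real.rpow_mul hx, ← Real.rpow_natCast x (q - 1),
      ← Real.rpow_add_of_nonneg hx (by positivity) (by positivity)]
    push_cast [Nat.one_le_iff_ne_zero.2 hq]
    ring_nf
  rw [integral_congr fun x hx => hrpow x (by rw [Set.uIcc_of_le hD] at hx; exact hx.1),
    integral_rpow (.inl (by linarith)), sub_add_cancel, Real.zero_rpow hpos.ne',
    Real.rpow_add_of_nonneg hD (by positivity) (by positivity), Real.rpow_mul hD,
    Real.rpow_natCast, Real.rpow_natCast, sub_zero]

theorem tendsto_pow_mul_integral_lowerGamma_mul_rpow (n : ℕ) {q : ℕ} (hq : q ≠ 0)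
    {α β θ D : ℝ} (hα : 0 ≤ α) (hβ : 0 ≤ β) (hθ : 0 ≤ θ) (hD : 0 ≤ D) :
    Tendsto (fun g : ℝ => g ^ (n + 1) *
        ∫ x in (0:ℝ)..D, lowerGamma (n + 1) (β * x ^ α / (g * θ)) * x ^ (q - 1)) atTop
      (𝓝 ((β * D ^ α / θ) ^ (n + 1) * D ^ q / ((n + 1) * (α * (n + 1) + q)))) := by
  have hφ₀ : ∀ x ∈ Set.uIoc 0 D, 0 ≤ β * x ^ α / θ := fun x hx => by
    have := Real.rpow_nonneg (Set.uIoc_of_le hD ▸ hx).1.le α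
    positivity
  have hint : ∫ x in (0:ℝ)..D, (β * x ^ α / θ) ^ (n + 1) / (n + 1) * x ^ (q - 1)
      = (β * D ^ α / θ) ^ (n + 1) * D ^ q / ((n + 1) * (α * (n + 1) + q)) := by
    have hsplit : (fun x : ℝ => (β * x ^ α / θ) ^ (n + 1) / (n + 1) * x ^ (q - 1))
        = fun x => (β / θ) ^ (n + 1) / (n + 1) * ((x ^ α) ^ (n + 1) * x ^ (q - 1)) := by
      funext x
      ring
    rw [hsplit, integral_const_mul, integral_rpow_pow_mul_pow_sub_one hα _ hq hD,
      div_mul_div_comm]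
    push_cast
    ring
  rw [← hint]
  simp_rw [mul_comm _ θ, ← div_div]
  exact tendsto_pow_mul_integral_lowerGamma_div n (by fun_prop) (continuous_pow _) hφ₀

theorem stmt11_general (k K n : ℕ) (hk : 1 ≤ k)
    (α β D θ : ℝ) (hα : 2 < α) (hβ : 0 < β) (hD : 0 < D) (hθ : 0 < θ) :
    Tendsto
      (fun g : ℝ => g ^ (n + 1) *
        (2 * k / Real.Gamma (n + 1) * (K.choose k : ℝ) *
          ∑ j ∈ Finset.range (K - k + 1), (-1 : ℝ) ^ j * ((K - k).choose j : ℝ) / D ^ (2 * (k + j)) *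
            ∫ x in (0:ℝ)..D, lowerGamma (n + 1) (β * x ^ α / (g * θ)) * x ^ (2 * (k + j) - 1)))
      atTop
      (nhds (2 * k / Real.Gamma (n + 2) * (K.choose k : ℝ) * (β * D ^ α / θ) ^ (n + 1) *
        ∑ j ∈ Finset.range (K - k + 1),
          (-1 : ℝ) ^ j * ((K - k).choose j : ℝ) / (α * (n + 1) + 2 * (k + j)))) := by
  have hterm := fun j => tendsto_pow_mul_integral_lowerGamma_mul_rpow n
    (q := 2 * (k + j)) (α := α) (by omega) (by linarith) hβ.le hθ.le hD.le
  have hsum := (tendsto_finsetSum (Finset.range (K - k + 1)) fun j _ =>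
    (hterm j).const_mul ((-1 : ℝ) ^ j * ((K - k).choose j : ℝ) / D ^ (2 * (k + j)))).const_mul
    (2 * k / Real.Gamma (n + 1) * (K.choose k : ℝ))
  convert hsum using 1
  · funext g
    rw [Finset.mul_sum, Finset.mul_sum, Finset.mul_sum]
    exact Finset.sum_congr rfl fun j _ => by ring
  · congr 1
    have hΓ : Real.Gamma (n + 2) = (n + 1) * Real.Gamma (n + 1) := by
      rw [← Real.Gamma_add_one (by positivity)]
      ring_nf
    rw [hΓ, Finset.mul_sum, Finset.mul_sum]
    refine Finset.sum_congr rfl fun j _ => ?_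
    have : 0 < Real.Gamma (n + 1) := Real.Gamma_pos_of_pos (by positivity)
    push_cast
    field_simp

theorem stmt11 (k K n : ℕ) (hk : 1 ≤ k) (hK : k ≤ K)
    (α β D θ : ℝ) (hα : 2 < α) (hβ : 0 < β) (hD : 0 < D) (hθ : 0 < θ) :
    Tendsto
      (fun g : ℝ => g ^ (n + 1) *
        (2 * k / Real.Gamma (n + 1) * (K.choose k : ℝ) *
          ∑ j ∈ Finset.range (K - k + 1), (-1 : ℝ) ^ j * ((K - k).choose j : ℝ) / D ^ (2 * (k + j)) *
            ∫ x in (0:ℝ)..D, lowerGamma (n + 1) (β * x ^ α / (g * θ)) * x ^ (2 * (k + j) - 1)))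
      atTop
      (nhds (2 * k / Real.Gamma (n + 2) * (K.choose k : ℝ) * (β * D ^ α / θ) ^ (n + 1) *
        ∑ j ∈ Finset.range (K - k + 1),
          (-1 : ℝ) ^ j * ((K - k).choose j : ℝ) / (α * (n + 1) + 2 * (k + j)))) :=
  stmt11_general k K n hk α β D θ hα hβ hD hθ
end

section
/- Fix a nonnegative integer n and reals α > 2, c > 0. Define p(D) = ∫_0^D γ(n+1, c x^α)·(2x/D²) dx / Γ(n+1). Then p(D)/D^{α(n+1)} → 2c^{n+1}/(Γ(n+2)·(α(n+1)+2)) as D → 0⁺, i.e., p(D) = Θ(D^{α(n+1)}) as D → 0. -/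
open Filter Topology

/-!
One L'Hôpital step, used twice: if `g t ~ L t^b` as `t → 0⁺` with `b > -1`, then
`∫₀^D g ~ L D^(b+1) / (b+1)`. For the integrand of `γ(a, ·)` this gives `γ(a, t) ~ t^a / a`;
hence `γ(a, c x^α) · 2x ~ 2 c^a x^(αa+1) / a`, and integrating once more gives
`2 c^a D^(αa+2) / (a (αa+2))`. Dividing by `D² Γ(a)` and using `a Γ(a) = Γ(a+1)` gives the constant.
-/

lemma tendsto_integral_div_rpow_nhdsGT_zero {g : ℝ → ℝ} (hg : Continuous g) {b L : ℝ}
    (hb : -1 < b) (hgL : Tendsto (fun t => g t / t ^ b) (𝓝[>] 0) (𝓝 L)) :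
    Tendsto (fun D => (∫ x in (0:ℝ)..D, g x) / D ^ (b + 1)) (𝓝[>] 0) (𝓝 (L / (b + 1))) := by
  have hb1 : 0 < b + 1 := by linarith
  refine HasDerivAt.lhopital_zero_nhdsGT (f' := g) (g' := fun D => (b + 1) * D ^ b) ?_ ?_ ?_ ?_ ?_ ?_
  · exact Eventually.of_forall fun D => (hg.integral_hasStrictDerivAt 0 D).hasDerivAt
  · filter_upwards [self_mem_nhdsWithin] with D (hD : 0 < D)
    simpa using Real.hasDerivAt_rpow_const (p := b + 1) (Or.inl hD.ne')
  · filter_upwards [self_mem_nhdsWithin] with D (hD : 0 < D)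
    positivity
  · have h := (hg.integral_hasStrictDerivAt 0 0).hasDerivAt.continuousAt.tendsto
    rw [intervalIntegral.integral_same] at h
    exact h.mono_left nhdsWithin_le_nhds
  · have h := (Real.continuousAt_rpow_const 0 (b + 1) (Or.inr hb1.le)).tendsto
    rw [Real.zero_rpow hb1.ne'] at h
    exact h.mono_left nhdsWithin_le_nhds
  · refine (hgL.div_const (b + 1)).congr' ?_
    filter_upwards [self_mem_nhdsWithin] with D (hD : 0 < D)
    rw [div_div, mul_comm]

lemma continuous_rpow_sub_one_mul_exp_neg {a : ℝ} (ha : 1 ≤ a) :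
    Continuous fun s : ℝ => s ^ (a - 1) * Real.exp (-s) :=
  (Real.continuous_rpow_const (by linarith)).mul continuous_neg.rexp

lemma continuous_lowerGamma {a : ℝ} (ha : 1 ≤ a) : Continuous (lowerGamma a) :=
  intervalIntegral.continuous_primitive
    (fun _ _ => (continuous_rpow_sub_one_mul_exp_neg ha).intervalIntegrable _ _) 0

lemma tendsto_lowerGamma_div_rpow_nhdsGT_zero {a : ℝ} (ha : 1 ≤ a) :
    Tendsto (fun t => lowerGamma a t / t ^ a) (𝓝[>] 0) (𝓝 (1 / a)) := by
  have hexp : Tendsto (fun t : ℝ => Real.exp (-t)) (𝓝[>] 0) (𝓝 1) := by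
    simpa using (continuous_neg.rexp.tendsto 0).mono_left nhdsWithin_le_nhds
  have h := tendsto_integral_div_rpow_nhdsGT_zero (continuous_rpow_sub_one_mul_exp_neg ha)
    (by linarith : -1 < a - 1) (hexp.congr' ?_)
  · simpa [lowerGamma] using h
  filter_upwards [self_mem_nhdsWithin] with t (ht : 0 < t)
  rw [mul_div_cancel_left₀ _ (Real.rpow_pos_of_pos ht _).ne']

lemma tendsto_comp_mul_rpow_div_rpow_nhdsGT_zero {f : ℝ → ℝ} {a L α c : ℝ} (hα : 0 < α)
    (hc : 0 < c) (hfL : Tendsto (fun t => f t / t ^ a) (𝓝[>] 0) (𝓝 L)) :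
    Tendsto (fun x => f (c * x ^ α) / x ^ (α * a)) (𝓝[>] 0) (𝓝 (c ^ a * L)) := by
  have hinner : Tendsto (fun x : ℝ => c * x ^ α) (𝓝[>] 0) (𝓝[>] 0) := by
    refine tendsto_nhdsWithin_of_tendsto_nhds_of_eventually_within _ ?_ ?_
    · have h := ((Real.continuous_rpow_const hα.le).const_mul c).tendsto 0
      rw [Real.zero_rpow hα.ne', mul_zero] at h
      exact h.mono_left nhdsWithin_le_nhds
    · filter_upwards [self_mem_nhdsWithin] with x (hx : 0 < x)
      exact mul_pos hc (Real.rpow_pos_of_pos hx α)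
  refine ((hfL.comp hinner).const_mul (c ^ a)).congr' ?_
  filter_upwards [self_mem_nhdsWithin] with x (hx : 0 < x)
  have hpow : (c * x ^ α) ^ a = c ^ a * x ^ (α * a) := by
    rw [Real.mul_rpow hc.le (Real.rpow_nonneg hx.le α), Real.rpow_mul hx.le]
  have hca : 0 < c ^ a := Real.rpow_pos_of_pos hc a
  simp only [Function.comp_apply, hpow]
  field_simp

lemma tendsto_integral_comp_mul_rpow_div_rpow_nhdsGT_zero {f : ℝ → ℝ} (hf : Continuous f)
    {a L α c : ℝ} (ha : 0 ≤ a) (hα : 0 < α) (hc : 0 < c)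
    (hfL : Tendsto (fun t => f t / t ^ a) (𝓝[>] 0) (𝓝 L)) :
    Tendsto (fun D => (∫ x in (0:ℝ)..D, f (c * x ^ α) * (2 * x)) / D ^ (α * a + 2)) (𝓝[>] 0)
      (𝓝 (2 * c ^ a * L / (α * a + 2))) := by
  have hg : Continuous fun x => f (c * x ^ α) * (2 * x) :=
    (hf.comp ((Real.continuous_rpow_const hα.le).const_mul c)).mul (continuous_const_mul 2)
  have hgL : Tendsto (fun x => f (c * x ^ α) * (2 * x) / x ^ (α * a + 1)) (𝓝[>] 0)
      (𝓝 (2 * c ^ a * L)) := by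
    rw [mul_assoc]
    refine ((tendsto_comp_mul_rpow_div_rpow_nhdsGT_zero hα hc hfL).const_mul 2).congr' ?_
    filter_upwards [self_mem_nhdsWithin] with x (hx : 0 < x)
    rw [Real.rpow_add_one hx.ne']
    field_simp
  have h := tendsto_integral_div_rpow_nhdsGT_zero hg (by nlinarith) hgL
  rw [add_assoc, one_add_one_eq_two] at h
  exact h

theorem stmt14 (n : ℕ) (α c : ℝ) (hα : 2 < α) (hc : 0 < c) :
    Tendsto
      (fun D : ℝ =>
        ((∫ x in (0:ℝ)..D, lowerGamma (n + 1) (c * x ^ α) * (2 * x / D ^ 2)) /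
          Real.Gamma (n + 1)) / D ^ (α * (n + 1)))
      (nhdsWithin 0 (Set.Ioi 0))
      (nhds (2 * c ^ (n + 1) / (Real.Gamma (n + 2) * (α * (n + 1) + 2)))) := by
  have ha : (1 : ℝ) ≤ n + 1 := by simp
  have h := (tendsto_integral_comp_mul_rpow_div_rpow_nhdsGT_zero (continuous_lowerGamma ha)
    (by linarith) (by linarith : 0 < α) hc (tendsto_lowerGamma_div_rpow_nhdsGT_zero ha)).div_const
      (Real.Gamma (n + 1))
  have hlim : 2 * c ^ ((n : ℝ) + 1) * (1 / (n + 1)) / (α * (n + 1) + 2) / Real.Gamma (n + 1)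
      = 2 * c ^ (n + 1) / (Real.Gamma (n + 2) * (α * (n + 1) + 2)) := by
    have hΓ : Real.Gamma (n + 2) = (n + 1) * Real.Gamma (n + 1) := by
      rw [show (n : ℝ) + 2 = n + 1 + 1 by ring, Real.Gamma_add_one (by positivity)]
    rw [hΓ, show c ^ ((n : ℝ) + 1) = c ^ (n + 1) by exact_mod_cast Real.rpow_natCast c (n + 1)]
    field_simp
  rw [hlim] at h
  refine h.congr' ?_
  filter_upwards [self_mem_nhdsWithin] with D (hD : 0 < D)
  simp_rw [mul_div_assoc', intervalIntegral.integral_div, Real.rpow_add hD, Real.rpow_two]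
  ring
end
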